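/- arXiv:1808.01772 — 2 statements merged into one kernel-verified Lean document; each statement's English description precedes it below -/
import Mathlib

section
/- Let (𝒜, H, D) be a smooth pre-spectral triple. Then for all x ∈ 𝒜 ∪ ∂(𝒜) and all k ≥ 0, the operator R^k_{|D*|}(x) maps dom_∞(|D*|) into dom_∞(D), and the operator R^k_{|D|}(x) maps dom_∞(|D|) into dom_∞(D). -/
set_option synthInstance.maxHeartbeats 400000
set_option maxHeartbeats 1000000

noncomputable section

namespace NCG

variable {H : Type*} [NormedAddCommGroup H] [InnerProductSpace ℂ H] [CompleteSpace H]

/-! ### Partially defined operators -/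

/-- Composition `S ∘ T` of partially defined linear operators: the domain is the set of
`x` in the domain of `T` such that `T x` lies in the domain of `S`. -/
def pcomp (S T : H →ₗ.[ℂ] H) : H →ₗ.[ℂ] H where
  domain := (S.domain.comap T.toFun).map T.domain.subtype
  toFun :=
    (S.toFun.comp (T.toFun.restrict (fun _ hx => hx))).comp
      ((Submodule.equivMapOfInjective T.domain.subtype (Submodule.injective_subtype _)
        (S.domain.comap T.toFun)).symm.toLinearMap)

/-- The identity as a partially defined operator (with full domain). -/
def idPMap : H →ₗ.[ℂ] H := ⟨⊤, LinearMap.id.comp (⊤ : Submodule ℂ H).subtype⟩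

/-- `n`-th power of a partially defined operator. -/
def ppow (T : H →ₗ.[ℂ] H) : ℕ → H →ₗ.[ℂ] H
  | 0 => idPMap
  | n + 1 => pcomp T (ppow T n)

/-- `dom_∞(T) = ⋂ₙ dom(Tⁿ)`. -/
def domInfty (T : H →ₗ.[ℂ] H) : Set H := ⋂ n : ℕ, ((ppow T n).domain : Set H)

/-- `1 + S` for a partially defined operator `S`. -/
def onePlus (S : H →ₗ.[ℂ] H) : H →ₗ.[ℂ] H := ⟨S.domain, S.toFun + S.domain.subtype⟩

/-- Composition of a bounded operator with a partially defined operator. -/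
def bcomp (U : H →L[ℂ] H) (L : H →ₗ.[ℂ] H) : H →ₗ.[ℂ] H :=
  ⟨L.domain, (U : H →ₗ[ℂ] H).comp L.toFun⟩

/-! ### Singular values, operator ideals and traces -/

/-- The `n`-th singular value (approximation number) of a bounded operator:
`μ(n,T) = inf{‖T − R‖ : rank R ≤ n}`. -/
def sval (T : H →L[ℂ] H) (n : ℕ) : ℝ :=
  sInf {c : ℝ | ∃ R : H →L[ℂ] H,
    Module.rank ℂ (LinearMap.range (R : H →ₗ[ℂ] H)) ≤ (n : Cardinal) ∧ ‖T - R‖ = c}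

/-- Membership in the weak Schatten ideal `𝓛_{p,∞}`: compact with `μ(n,T) = O((n+1)^{-1/p})`. -/
def MemLpW (p : ℝ) (T : H →L[ℂ] H) : Prop :=
  IsCompactOperator T ∧ ∃ C : ℝ, ∀ n : ℕ, sval T n ≤ C * ((n : ℝ) + 1) ^ (-(1 / p))

/-- Trace class `𝓛₁`. -/
def MemL1 (T : H →L[ℂ] H) : Prop :=
  IsCompactOperator T ∧ Summable (fun n => sval T n)

/-- The trace norm `‖T‖₁ = Σₙ μ(n,T)`. -/
def traceNorm (T : H →L[ℂ] H) : ℝ := ∑' n, sval T n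

/-- The Schatten class `𝓛_s`. -/
def MemSchatten (s : ℝ) (T : H →L[ℂ] H) : Prop :=
  IsCompactOperator T ∧ Summable (fun n => sval T n ^ s)

/-- The Lorentz ideal `𝓛_{q,1}`. -/
def MemLq1 (q : ℝ) (T : H →L[ℂ] H) : Prop :=
  Summable (fun n : ℕ => sval T n / ((n : ℝ) + 1) ^ (1 - 1 / q))

/-- A trace on `𝓛_{1,∞}`: a unitarily invariant linear functional. -/
structure TraceOnL1W (H : Type*) [NormedAddCommGroup H] [InnerProductSpace ℂ H]
    [CompleteSpace H] where
  toFun : (H →L[ℂ] H) → ℂ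
  map_add : ∀ S T : H →L[ℂ] H, MemLpW 1 S → MemLpW 1 T → toFun (S + T) = toFun S + toFun T
  map_smul : ∀ (c : ℂ) (T : H →L[ℂ] H), MemLpW 1 T → toFun (c • T) = c * toFun T
  unitary_invariant : ∀ U T : H →L[ℂ] H, MemLpW 1 T →
    star U * U = 1 → U * star U = 1 → toFun (U * T * star U) = toFun T

/-- A trace on `𝓛_{1,∞}` is normalised if it takes the value `1` on the operator which is
diagonal with eigenvalue sequence `{1/(n+1)}ₙ` in some orthonormal basis. -/
def TraceOnL1W.Normalised (τ : TraceOnL1W H) : Prop :=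
  ∀ (b : HilbertBasis ℕ ℂ H) (T : H →L[ℂ] H),
    (∀ ξ : H, T ξ = ∑' n : ℕ, (((n : ℂ) + 1)⁻¹ * (inner ℂ (b n) ξ : ℂ)) • b n) → τ.toFun T = 1

/-- The operator trace, computed in some fixed Hilbert basis. -/
def opTrace (T : H →L[ℂ] H) : ℂ :=
  ∑' i : (exists_hilbertBasis ℂ H).choose,
    (inner ℂ ((exists_hilbertBasis ℂ H).choose_spec.choose i)
      (T ((exists_hilbertBasis ℂ H).choose_spec.choose i)) : ℂ)

/-! ### Resolvents and related characterisations -/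

/-- `R` is the (everywhere defined, bounded) inverse of `1 + D*D`. -/
def IsResolventDstarD (D : H →ₗ.[ℂ] H) (R : H →L[ℂ] H) : Prop :=
  0 ≤ R ∧ ∀ ξ : H, ∃ (h1 : R ξ ∈ D.domain) (h2 : (D ⟨R ξ, h1⟩ : H) ∈ D.adjoint.domain),
    R ξ + D.adjoint ⟨D ⟨R ξ, h1⟩, h2⟩ = ξ

/-- `R` is the (everywhere defined, bounded) inverse of `1 + DD*`. -/
def IsResolventDDstar (D : H →ₗ.[ℂ] H) (R : H →L[ℂ] H) : Prop :=
  0 ≤ R ∧ ∀ ξ : H, ∃ (h1 : R ξ ∈ D.adjoint.domain) (h2 : (D.adjoint ⟨R ξ, h1⟩ : H) ∈ D.domain),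
    R ξ + D ⟨D.adjoint ⟨R ξ, h1⟩, h2⟩ = ξ

/-- `R` is an (everywhere defined, bounded) right inverse of `S + z`. -/
def IsResolventAt (S : H →ₗ.[ℂ] H) (z : ℂ) (R : H →L[ℂ] H) : Prop :=
  ∀ ξ : H, ∃ h : R ξ ∈ S.domain, S ⟨R ξ, h⟩ + z • R ξ = ξ

/-- `M = |D|`: the nonnegative self-adjoint operator with `M² = D*D`. -/
def IsAbsOf (D M : H →ₗ.[ℂ] H) : Prop :=
  IsSelfAdjoint M ∧ (∀ x : M.domain, 0 ≤ (inner ℂ (M x) (x : H) : ℂ).re) ∧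
    pcomp M M = pcomp D.adjoint D

/-- `M = |D*|`: the nonnegative self-adjoint operator with `M² = DD*`. -/
def IsAbsAdjOf (D M : H →ₗ.[ℂ] H) : Prop :=
  IsSelfAdjoint M ∧ (∀ x : M.domain, 0 ≤ (inner ℂ (M x) (x : H) : ℂ).re) ∧
    pcomp M M = pcomp D (LinearPMap.adjoint D)

/-- `L = (1+T²)^{1/2}`: the nonnegative self-adjoint operator with `L² = 1 + T∘T`. -/
def IsSqrtOnePlusSq (T L : H →ₗ.[ℂ] H) : Prop :=
  IsSelfAdjoint L ∧ (∀ x : L.domain, 0 ≤ (inner ℂ (L x) (x : H) : ℂ).re) ∧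
    pcomp L L = onePlus (pcomp T T)

/-- `U = χ_{[0,∞)}(T) − χ_{(−∞,0)}(T)` for a self-adjoint operator `T`:  a self-adjoint
involution commuting with `T`, equal to the identity on `ker T`, with `U T = |T| ≥ 0`. -/
def IsSignOf (T : H →ₗ.[ℂ] H) (U : H →L[ℂ] H) : Prop :=
  IsSelfAdjoint U ∧ U * U = 1 ∧
    (∀ x (h : x ∈ T.domain), ∃ h2 : U x ∈ T.domain, U (T ⟨x, h⟩) = T ⟨U x, h2⟩) ∧
    (∀ x (h : x ∈ T.domain), 0 ≤ (inner ℂ (x : H) (U (T ⟨x, h⟩)) : ℂ).re) ∧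
    (∀ x (h : x ∈ T.domain), T ⟨x, h⟩ = 0 → U x = x)

/-- `F` is the phase of `D` with `D = F|D|`: `F` intertwines `|D| = M` with `D` and
vanishes on `ker D`. -/
def IsPhaseOf (D M : H →ₗ.[ℂ] H) (F : H →L[ℂ] H) : Prop :=
  (∀ x (h1 : x ∈ M.domain) (h2 : x ∈ D.domain), F (M ⟨x, h1⟩) = D ⟨x, h2⟩) ∧
    (∀ x (h : x ∈ D.domain), D ⟨x, h⟩ = 0 → F x = 0)

/-- `P` is the orthogonal projection onto `ker D`. -/
def IsKerProj (D : H →ₗ.[ℂ] H) (P : H →L[ℂ] H) : Prop :=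
  IsSelfAdjoint P ∧ (∀ ξ : H, ∃ h : P ξ ∈ D.domain, D ⟨P ξ, h⟩ = 0) ∧
    (∀ x (h : x ∈ D.domain), D ⟨x, h⟩ = 0 → P x = x)

/-! ### Commutator extensions and iterated operations -/

/-- `Y` is the bounded extension of the commutator `[L, a]` for a partially defined `L`. -/
def IsCommExt (L : H →ₗ.[ℂ] H) (a Y : H →L[ℂ] H) : Prop :=
  ∀ ξ (h : ξ ∈ L.domain) (h2 : a ξ ∈ L.domain), Y ξ = L ⟨a ξ, h2⟩ - a (L ⟨ξ, h⟩)

/-- `Y` is the bounded extension of `R_L(S) = [L, S] C` (where `L` plays the role of `E²` and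
`C` of `(1+E²)^{-1/2}`). -/
def IsRExt (L : H →ₗ.[ℂ] H) (C S Y : H →L[ℂ] H) : Prop :=
  ∀ ξ (h1 : C ξ ∈ L.domain) (h2 : S (C ξ) ∈ L.domain),
    Y ξ = L ⟨S (C ξ), h2⟩ - S (L ⟨C ξ, h1⟩)

/-- `S` maps `dom_∞(L)` into itself. -/
def MapsDomInfty (L : H →ₗ.[ℂ] H) (S : H →L[ℂ] H) : Prop :=
  ∀ ξ ∈ domInfty L, S ξ ∈ domInfty L

/-- `RChain L C k T S` means `S = R_E^k(T)` where `E² = L` and `C = (1+E²)^{-1/2}`. -/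
inductive RChain (L : H →ₗ.[ℂ] H) (C : H →L[ℂ] H) : ℕ → (H →L[ℂ] H) → (H →L[ℂ] H) → Prop
  | zero (T : H →L[ℂ] H) : RChain L C 0 T T
  | succ (k : ℕ) (T S Y : H →L[ℂ] H) : RChain L C k T S → MapsDomInfty L S →
      IsRExt L C S Y → RChain L C (k + 1) T Y

/-- `T ∈ dom_∞(R_E)` where `E² = L`, `C = (1+E²)^{-1/2}`. -/
def MemDomInftyR (L : H →ₗ.[ℂ] H) (C : H →L[ℂ] H) (T : H →L[ℂ] H) : Prop :=
  MapsDomInfty L T ∧ ∀ k : ℕ, ∃ S, RChain L C k T S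

/-- `DeltaChain L k T S` means `S = δ^k(T)` where `δ = [L, ·]` (with bounded extensions). -/
inductive DeltaChain (L : H →ₗ.[ℂ] H) : ℕ → (H →L[ℂ] H) → (H →L[ℂ] H) → Prop
  | zero (T : H →L[ℂ] H) : DeltaChain L 0 T T
  | succ (k : ℕ) (T S Y : H →L[ℂ] H) : DeltaChain L k T S → IsCommExt L S Y →
      DeltaChain L (k + 1) T Y

/-! ### Pre-spectral triples -/

/-- A pre-spectral triple `(𝒜, H, D)`:  `𝒜` a ∗-subalgebra of `B(H)`, `D` closed, symmetric
and densely defined, such that each `a ∈ 𝒜` maps `dom D*` into `dom D`, the commutator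
`[D*, a]` has bounded extension `∂ a`, and `a (1+D*D)^{-1/2}` is compact. -/
structure PreSpectralTriple (H : Type*) [NormedAddCommGroup H] [InnerProductSpace ℂ H]
    [CompleteSpace H] where
  /-- the ∗-algebra `𝒜` of bounded operators -/
  A : StarSubalgebra ℂ (H →L[ℂ] H)
  /-- the closed symmetric densely defined operator `D` -/
  D : H →ₗ.[ℂ] H
  dense_domain : Dense (D.domain : Set H)
  symmetric : D.IsFormalAdjoint D
  closed : D.IsClosed
  maps_adj_dom : ∀ a ∈ A, ∀ ξ ∈ D.adjoint.domain, a ξ ∈ D.domain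
  /-- `∂ a` : the bounded extension of the commutator `[D*, a]` -/
  der : (H →L[ℂ] H) → (H →L[ℂ] H)
  der_spec : ∀ a ∈ A, ∀ ξ (hξ : ξ ∈ D.adjoint.domain) (h2 : a ξ ∈ D.adjoint.domain),
    der a ξ = D.adjoint ⟨a ξ, h2⟩ - a (D.adjoint ⟨ξ, hξ⟩)
  /-- `(1 + D*D)⁻¹` -/
  RD : H →L[ℂ] H
  RD_spec : IsResolventDstarD D RD
  /-- `(1 + DD*)⁻¹` -/
  RDs : H →L[ℂ] H
  RDs_spec : IsResolventDDstar D RDs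
  compact_res : ∀ a ∈ A, IsCompactOperator ((a : H →L[ℂ] H) * CFC.sqrt RD)

namespace PreSpectralTriple

variable (st : PreSpectralTriple H)

/-- The set `𝒜 ∪ ∂(𝒜)`. -/
def AD : Set (H →L[ℂ] H) := {x | x ∈ st.A ∨ ∃ a ∈ st.A, x = st.der a}

/-- `D*D` as a partially defined operator. -/
def DstarD : H →ₗ.[ℂ] H := pcomp st.D.adjoint st.D

/-- `DD*` as a partially defined operator. -/
def DDstar : H →ₗ.[ℂ] H := pcomp st.D st.D.adjoint

/-- `(𝒜, H, D)` is `p`-dimensional:  `x (1+|D|²)^{-p/2}` and `x (1+|D*|²)^{-p/2}`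
lie in `𝓛_{1,∞}` for all `x ∈ 𝒜 ∪ ∂(𝒜)`. -/
def IsDim (p : ℝ) : Prop :=
  ∀ x ∈ st.AD, MemLpW 1 (x * CFC.rpow st.RD (p / 2)) ∧ MemLpW 1 (x * CFC.rpow st.RDs (p / 2))

/-- `(𝒜, H, D)` is smooth. -/
def Smooth : Prop :=
  ∀ x ∈ st.AD,
    (∀ n : ℕ, ∀ ξ ∈ (ppow st.D.adjoint n).domain, x ξ ∈ (ppow st.D n).domain) ∧
      MemDomInftyR st.DstarD (CFC.sqrt st.RD) x ∧
      MemDomInftyR st.DDstar (CFC.sqrt st.RDs) x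

/-- `(𝒜, H, D)` is smoothly `p`-dimensional. -/
def SmoothlyDim (p : ℝ) : Prop :=
  st.Smooth ∧ st.IsDim p ∧
    ∀ x ∈ st.AD, ∀ k : ℕ,
      (∀ S, RChain st.DstarD (CFC.sqrt st.RD) k x S → MemLpW 1 (S * CFC.rpow st.RD (p / 2))) ∧
      (∀ S, RChain st.DDstar (CFC.sqrt st.RDs) k x S → MemLpW 1 (S * CFC.rpow st.RDs (p / 2)))

/-- Every element of `𝒜` factorises as a product of two elements of `𝒜`. -/
def Factorises : Prop := ∀ a ∈ st.A, ∃ a₁ ∈ st.A, ∃ a₂ ∈ st.A, a = a₁ * a₂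

/-- Hypothesis (C). -/
def HypC (p : ℕ) : Prop :=
  1 ≤ p ∧ st.SmoothlyDim p ∧ st.Factorises ∧
    (1 < p → ∀ a ∈ st.A, 0 ≤ a →
      MemLpW ((p : ℝ) / 4) (a * st.RDs * a - a * st.RD * a)) ∧
    (p = 1 → MemLpW ((1 : ℝ) / 4) (st.RD - st.RDs))

/-- A grading of the pre-spectral triple: a self-adjoint unitary commuting with `𝒜` and
anticommuting with `D`. -/
def IsGrading (γ : H →L[ℂ] H) : Prop :=
  IsSelfAdjoint γ ∧ γ * γ = 1 ∧ (∀ a ∈ st.A, γ * a = a * γ) ∧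
    (∀ ξ (h : ξ ∈ st.D.domain), ∃ h2 : γ ξ ∈ st.D.domain, st.D ⟨γ ξ, h2⟩ = -γ (st.D ⟨ξ, h⟩))

end PreSpectralTriple

/-! ### The clone -/

/-- `H ⊗ ℂ² = H ⊕ H` with the Hilbert space structure. -/
abbrev Dbl (H : Type*) [NormedAddCommGroup H] [InnerProductSpace ℂ H] : Type _ :=
  WithLp 2 (H × H)

/-- The 2×2 operator matrix `[[a,b],[c,d]]` acting on `H ⊕ H`. -/
def blocks (a b c d : H →L[ℂ] H) : Dbl H →L[ℂ] Dbl H :=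
  ((WithLp.prodContinuousLinearEquiv 2 ℂ H H).symm : (H × H) →L[ℂ] Dbl H) ∘L
    (((a ∘L ContinuousLinearMap.fst ℂ H H) + (b ∘L ContinuousLinearMap.snd ℂ H H)).prod
      ((c ∘L ContinuousLinearMap.fst ℂ H H) + (d ∘L ContinuousLinearMap.snd ℂ H H))) ∘L
    ((WithLp.prodContinuousLinearEquiv 2 ℂ H H : Dbl H →L[ℂ] H × H))

/-- The operator `a ⊗ q` on `H ⊗ ℂ²`, where `q = ½ [[1,1],[1,1]]`. -/
def cloneOp (a : H →L[ℂ] H) : Dbl H →L[ℂ] Dbl H :=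
  blocks ((2 : ℂ)⁻¹ • a) ((2 : ℂ)⁻¹ • a) ((2 : ℂ)⁻¹ • a) ((2 : ℂ)⁻¹ • a)

section cloneD
variable (D : H →ₗ.[ℂ] H)

private def fstR : (D.domain.prod D.adjoint.domain) →ₗ[ℂ] D.domain :=
  (LinearMap.fst ℂ H H).restrict fun _ hx => (Submodule.mem_prod.mp hx).1

private def sndR : (D.domain.prod D.adjoint.domain) →ₗ[ℂ] D.adjoint.domain :=
  (LinearMap.snd ℂ H H).restrict fun _ hx => (Submodule.mem_prod.mp hx).2

private def cloneDomain : Submodule ℂ (Dbl H) :=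
  (D.domain.prod D.adjoint.domain).comap (WithLp.linearEquiv 2 ℂ (H × H)).toLinearMap

private def intoProd : cloneDomain D →ₗ[ℂ] (D.domain.prod D.adjoint.domain) :=
  (WithLp.linearEquiv 2 ℂ (H × H)).toLinearMap.restrict fun _ hx => hx

/-- The operator `D₂ = [[0, D*],[D, 0]]` with domain `dom(D) ⊕ dom(D*)`. -/
def cloneD : Dbl H →ₗ.[ℂ] Dbl H where
  domain := cloneDomain D
  toFun :=
    (WithLp.linearEquiv 2 ℂ (H × H)).symm.toLinearMap ∘ₗ
      (LinearMap.prod (D.adjoint.toFun ∘ₗ sndR D) (D.toFun ∘ₗ fstR D)) ∘ₗ intoProd D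

end cloneD

end NCG

/-!
Writing `L` for `D*D` or `DD*` (so that `dom_∞(L)` is `dom_∞(|D|)` resp. `dom_∞(|D*|)`), both
operators are restrictions of `D*D*`, so `dom_∞(L) ⊆ dom_∞(D*)`, which `x` maps into `dom_∞(D)` by
smoothness. For the inductive step, `R_L(S) ξ = L (S (C ξ)) - S (L (C ξ))` with
`C = (1 + L)^{-1/2}`. Since `C` commutes with the resolvent `(1 + L)⁻¹` it commutes with `L`, hence
preserves `dom_∞(L)`; and `L` acts as `D²` on `dom(D²)`, so both terms lie in `dom_∞(D)`.
-/

namespace NCG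

variable {H : Type*} [NormedAddCommGroup H] [InnerProductSpace ℂ H]

section PartialPowers

variable {S S' T T' : H →ₗ.[ℂ] H} {ξ : H}

theorem mem_pcomp_domain :
    ξ ∈ (pcomp S T).domain ↔ ∃ h : ξ ∈ T.domain, (T ⟨ξ, h⟩ : H) ∈ S.domain := by
  simp only [pcomp, Submodule.mem_map, Submodule.mem_comap]
  constructor
  · rintro ⟨y, hy, rfl⟩
    exact ⟨y.2, hy⟩
  · rintro ⟨h, h2⟩
    exact ⟨⟨ξ, h⟩, h2, rfl⟩

theorem pcomp_apply (x : (pcomp S T).domain) (h : (x : H) ∈ T.domain)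
    (h2 : (T ⟨x, h⟩ : H) ∈ S.domain) : pcomp S T x = S ⟨T ⟨x, h⟩, h2⟩ := by
  set e := Submodule.equivMapOfInjective T.domain.subtype (Submodule.injective_subtype _)
    (S.domain.comap T.toFun)
  have hx : ((e.symm x : S.domain.comap T.toFun) : T.domain) = ⟨x, h⟩ :=
    Subtype.ext (Submodule.map_equivMapOfInjective_symm_apply _ _ _ x)
  change S.toFun ((T.toFun.restrict fun _ hx => hx) (e.symm x)) = _
  congr 1
  exact Subtype.ext (congrArg T.toFun hx)

theorem pcomp_mono (hS : S ≤ S') (hT : T ≤ T') : pcomp S T ≤ pcomp S' T' := by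
  refine ⟨fun ξ hξ => ?_, fun x y hxy => ?_⟩
  · obtain ⟨h, h2⟩ := mem_pcomp_domain.mp hξ
    have hT' : (T ⟨ξ, h⟩ : H) = T' ⟨ξ, hT.1 h⟩ := hT.2 rfl
    exact mem_pcomp_domain.mpr ⟨hT.1 h, by rw [← hT']; exact hS.1 h2⟩
  · obtain ⟨h, h2⟩ := mem_pcomp_domain.mp x.2
    obtain ⟨h', h2'⟩ := mem_pcomp_domain.mp y.2
    rw [pcomp_apply x h h2, pcomp_apply y h' h2']
    exact hS.2 (hT.2 hxy)

theorem ppow_succ_apply' (n : ℕ) (hξ : ξ ∈ (ppow T (n + 1)).domain) :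
    ∃ (h : ξ ∈ T.domain) (h' : (T ⟨ξ, h⟩ : H) ∈ (ppow T n).domain),
      ppow T (n + 1) ⟨ξ, hξ⟩ = ppow T n ⟨T ⟨ξ, h⟩, h'⟩ := by
  induction n generalizing ξ with
  | zero =>
    obtain ⟨h0, h⟩ := mem_pcomp_domain.mp hξ
    exact ⟨h, Submodule.mem_top, pcomp_apply ⟨ξ, hξ⟩ h0 h⟩
  | succ n ih =>
    obtain ⟨hn, hT⟩ := mem_pcomp_domain.mp hξ
    obtain ⟨h, h', heq⟩ := ih hn
    have hT' : (ppow T n ⟨T ⟨ξ, h⟩, h'⟩ : H) ∈ T.domain := heq ▸ hT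
    have hsucc : (T ⟨ξ, h⟩ : H) ∈ (ppow T (n + 1)).domain := mem_pcomp_domain.mpr ⟨h', hT'⟩
    refine ⟨h, hsucc, ?_⟩
    calc (ppow T (n + 2) ⟨ξ, hξ⟩ : H)
        = T ⟨ppow T (n + 1) ⟨ξ, hn⟩, hT⟩ := pcomp_apply ⟨ξ, hξ⟩ hn hT
      _ = T ⟨ppow T n ⟨T ⟨ξ, h⟩, h'⟩, hT'⟩ := by congr 2
      _ = ppow T (n + 1) ⟨T ⟨ξ, h⟩, hsucc⟩ :=
          (pcomp_apply (S := T) (T := ppow T n) ⟨_, hsucc⟩ h' hT').symm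

theorem mem_domInfty : ξ ∈ domInfty T ↔ ∀ n, ξ ∈ (ppow T n).domain :=
  Set.mem_iInter

theorem exists_apply_mem_domInfty (hξ : ξ ∈ domInfty T) :
    ∃ h : ξ ∈ T.domain, (T ⟨ξ, h⟩ : H) ∈ domInfty T := by
  obtain ⟨h, -, -⟩ := ppow_succ_apply' 0 (mem_domInfty.mp hξ 1)
  refine ⟨h, mem_domInfty.mpr fun n => ?_⟩
  obtain ⟨h', hn, -⟩ := ppow_succ_apply' n (mem_domInfty.mp hξ (n + 1))
  exact hn

theorem apply_mem_domInfty (hξ : ξ ∈ domInfty T) (h : ξ ∈ T.domain) :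
    (T ⟨ξ, h⟩ : H) ∈ domInfty T :=
  (exists_apply_mem_domInfty hξ).2

theorem subset_domInfty {s : Set H} (hs : ∀ ξ ∈ s, ∃ h : ξ ∈ T.domain, (T ⟨ξ, h⟩ : H) ∈ s) :
    s ⊆ domInfty T := by
  have hpow : ∀ n, ∀ ξ ∈ s, ∃ h : ξ ∈ (ppow T n).domain, (ppow T n ⟨ξ, h⟩ : H) ∈ s := by
    intro n
    induction n with
    | zero => exact fun ξ hξ => ⟨Submodule.mem_top, hξ⟩
    | succ n ih =>
      intro ξ hξ
      obtain ⟨hn, hs'⟩ := ih ξ hξ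
      obtain ⟨hT, hTs⟩ := hs _ hs'
      have hmem : ξ ∈ (ppow T (n + 1)).domain := mem_pcomp_domain.mpr ⟨hn, hT⟩
      refine ⟨hmem, ?_⟩
      rwa [show (ppow T (n + 1) ⟨ξ, hmem⟩ : H) = T ⟨_, hT⟩ from
        pcomp_apply (S := T) (T := ppow T n) ⟨ξ, hmem⟩ hn hT]
  exact fun ξ hξ => mem_domInfty.mpr fun n => (hpow n ξ hξ).1

theorem sub_mem_domInfty {η : H} (hξ : ξ ∈ domInfty T) (hη : η ∈ domInfty T) :
    ξ - η ∈ domInfty T :=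
  mem_domInfty.mpr fun n => Submodule.sub_mem _ (mem_domInfty.mp hξ n) (mem_domInfty.mp hη n)

theorem domInfty_mono (h : S ≤ T) : domInfty S ⊆ domInfty T :=
  subset_domInfty fun _ hξ =>
    let ⟨hS, hSξ⟩ := exists_apply_mem_domInfty hξ
    ⟨h.1 hS, h.2 (x := ⟨_, hS⟩) (y := ⟨_, h.1 hS⟩) rfl ▸ hSξ⟩

theorem domInfty_pcomp_self_subset : domInfty (pcomp T T) ⊆ domInfty T := by
  refine (Set.subset_union_left (t := {η | ∃ ξ ∈ domInfty (pcomp T T), ∃ h : ξ ∈ T.domain,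
    (T ⟨ξ, h⟩ : H) = η})).trans (subset_domInfty ?_)
  rintro _ (hξ | ⟨ξ, hξ, h, rfl⟩)
  · obtain ⟨h, -⟩ := mem_pcomp_domain.mp (exists_apply_mem_domInfty hξ).1
    exact ⟨h, Or.inr ⟨_, hξ, h, rfl⟩⟩
  · obtain ⟨hTT, hTTξ⟩ := exists_apply_mem_domInfty hξ
    obtain ⟨h', hT⟩ := mem_pcomp_domain.mp hTT
    exact ⟨hT, Or.inl (pcomp_apply ⟨ξ, hTT⟩ h' hT ▸ hTTξ)⟩

theorem pcomp_self_apply_mem_domInfty (hξ : ξ ∈ domInfty T) (h : ξ ∈ (pcomp T T).domain) :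
    (pcomp T T ⟨ξ, h⟩ : H) ∈ domInfty T := by
  obtain ⟨h1, h2⟩ := mem_pcomp_domain.mp h
  rw [pcomp_apply ⟨ξ, h⟩ h1 h2]
  exact apply_mem_domInfty (apply_mem_domInfty hξ h1) h2

theorem apply_mem_domInfty_of_le_pcomp {L : H →ₗ.[ℂ] H} (hST : S ≤ T) (hL : L ≤ pcomp T T)
    (h : ξ ∈ L.domain) (hξ : ξ ∈ domInfty S) : (L ⟨ξ, h⟩ : H) ∈ domInfty S := by
  obtain ⟨h1, hSξ⟩ := exists_apply_mem_domInfty hξ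
  obtain ⟨h2, -⟩ := exists_apply_mem_domInfty hSξ
  have hSS : ξ ∈ (pcomp S S).domain := mem_pcomp_domain.mpr ⟨h1, h2⟩
  rw [hL.2 (y := ⟨ξ, hL.1 h⟩) rfl, ← (pcomp_mono hST hST).2 (x := ⟨ξ, hSS⟩) rfl]
  exact pcomp_self_apply_mem_domInfty hξ hSS

end PartialPowers

section Resolvent

def IsAccretive (L : H →ₗ.[ℂ] H) : Prop :=
  ∀ w : L.domain, 0 ≤ (inner ℂ (w : H) (L w)).re

theorem isAccretive_pcomp_of_isFormalAdjoint {S T : H →ₗ.[ℂ] H} (h : S.IsFormalAdjoint T) :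
    IsAccretive (pcomp S T) := fun w => by
  obtain ⟨h1, h2⟩ := mem_pcomp_domain.mp w.2
  rw [pcomp_apply w h1 h2, ← inner_conj_symm, h ⟨_, h2⟩ ⟨w, h1⟩, Complex.conj_re]
  exact inner_self_nonneg (𝕜 := ℂ)

variable {L : H →ₗ.[ℂ] H} {R C : H →L[ℂ] H}

theorem IsAccretive.eq_zero_of_apply_add_self_eq_zero (hL : IsAccretive L) (w : L.domain)
    (hw : L w + (w : H) = 0) : (w : H) = 0 := by
  have hre : (inner ℂ (w : H) (L w)).re + ‖(w : H)‖ ^ 2 = 0 := by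
    have := congrArg (fun v => (inner ℂ (w : H) v).re) hw
    simp only [inner_add_right, Complex.add_re, inner_zero_right, Complex.zero_re] at this
    rwa [show (inner ℂ (w : H) w).re = ‖(w : H)‖ ^ 2 from inner_self_eq_norm_sq (𝕜 := ℂ) _] at this
  have : ‖(w : H)‖ ^ 2 = 0 := le_antisymm (by linarith [hL w]) (by positivity)
  simpa using this

theorem IsResolventAt.apply_add_self (hR : IsResolventAt L 1 R)
    (hL : IsAccretive L) (w : L.domain) :
    R (L w + w) = w := by
  obtain ⟨h, hRw⟩ := hR (L w + w)
  rw [one_smul] at hRw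
  have hdiff : (L (⟨_, h⟩ - w) : H) + ((⟨_, h⟩ - w : L.domain) : H) = 0 := by
    rw [LinearPMap.map_sub, Submodule.coe_sub]
    linear_combination (norm := abel) hRw
  exact sub_eq_zero.mp (hL.eq_zero_of_apply_add_self_eq_zero _ hdiff)

theorem IsResolventAt.exists_apply_eq_of_commute (hR : IsResolventAt L 1 R)
    (hL : IsAccretive L) (hC : Commute C R) (w : L.domain) :
    ∃ h : C w ∈ L.domain, L ⟨C w, h⟩ = C (L w) := by
  have hCw : C w = R (C (L w + w)) :=
    calc C w = C (R (L w + w)) := by rw [hR.apply_add_self hL]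
      _ = R (C (L w + w)) := congrArg (fun T : H →L[ℂ] H => T (L w + w)) hC.eq
  obtain ⟨h, hRC⟩ := hR (C (L w + w))
  have hLR : L ⟨_, h⟩ = C (L w + w) - C w := by
    rw [one_smul] at hRC
    rw [hCw]
    exact eq_sub_of_add_eq hRC
  refine ⟨hCw ▸ h, ?_⟩
  rw [show (⟨C w, hCw ▸ h⟩ : L.domain) = ⟨_, h⟩ from Subtype.ext hCw, hLR, map_add]
  abel

theorem mapsDomInfty_of_commute
    (hC : ∀ w : L.domain, ∃ h : C w ∈ L.domain, L ⟨C w, h⟩ = C (L w)) : MapsDomInfty L C := by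
  refine fun ξ hξ => subset_domInfty (s := C '' domInfty L) ?_ ⟨ξ, hξ, rfl⟩
  rintro _ ⟨η, hη, rfl⟩
  obtain ⟨hL, hLη⟩ := exists_apply_mem_domInfty hη
  obtain ⟨h, hCL⟩ := hC ⟨η, hL⟩
  exact ⟨h, hCL ▸ ⟨_, hLη, rfl⟩⟩

theorem IsResolventAt.mapsDomInfty_sqrt [CompleteSpace H] (hR : IsResolventAt L 1 R)
    (hR₀ : 0 ≤ R) (hL : IsAccretive L) :
    MapsDomInfty L (CFC.sqrt R) := by
  have hcomm : Commute (CFC.sqrt R) R := by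
    simpa only [CFC.sqrt_mul_sqrt_self R hR₀] using
      (Commute.refl (CFC.sqrt R)).mul_right (Commute.refl (CFC.sqrt R))
  exact mapsDomInfty_of_commute (hR.exists_apply_eq_of_commute hL hcomm)

end Resolvent

theorem RChain.apply_mem_domInfty {E L : H →ₗ.[ℂ] H} {C T S : H →L[ℂ] H} {k : ℕ}
    (hS : RChain L C k T S) (hC : MapsDomInfty L C)
    (hL : ∀ η (h : η ∈ L.domain), η ∈ domInfty E → (L ⟨η, h⟩ : H) ∈ domInfty E)
    (hT : ∀ ξ ∈ domInfty L, T ξ ∈ domInfty E) : ∀ ξ ∈ domInfty L, S ξ ∈ domInfty E := by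
  induction hS with
  | zero => exact hT
  | succ k T S Y _ hSL hY ih =>
    intro ξ hξ
    have hCξ := hC ξ hξ
    obtain ⟨h1, hLCξ⟩ := exists_apply_mem_domInfty hCξ
    obtain ⟨h2, -⟩ := exists_apply_mem_domInfty (hSL _ hCξ)
    rw [hY ξ h1 h2]
    exact sub_mem_domInfty (hL _ h2 (ih hT _ hCξ)) (ih hT _ hLCξ)

theorem IsResolventDDstar.isResolventAt [CompleteSpace H] {D : H →ₗ.[ℂ] H} {R : H →L[ℂ] H}
    (hR : IsResolventDDstar D R) : IsResolventAt (pcomp D D.adjoint) 1 R := fun ξ => by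
  obtain ⟨h1, h2, hξ⟩ := hR.2 ξ
  refine ⟨mem_pcomp_domain.mpr ⟨h1, h2⟩, ?_⟩
  rw [pcomp_apply _ h1 h2, one_smul, add_comm]
  exact hξ

theorem IsResolventDstarD.isResolventAt [CompleteSpace H] {D : H →ₗ.[ℂ] H} {R : H →L[ℂ] H}
    (hR : IsResolventDstarD D R) : IsResolventAt (pcomp D.adjoint D) 1 R := fun ξ => by
  obtain ⟨h1, h2, hξ⟩ := hR.2 ξ
  refine ⟨mem_pcomp_domain.mpr ⟨h1, h2⟩, ?_⟩
  rw [pcomp_apply _ h1 h2, one_smul, add_comm]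
  exact hξ

namespace PreSpectralTriple

variable [CompleteSpace H] (st : PreSpectralTriple H)

theorem D_le_adjoint : st.D ≤ st.D.adjoint :=
  st.symmetric.le_adjoint st.dense_domain

theorem DDstar_le : st.DDstar ≤ pcomp st.D.adjoint st.D.adjoint :=
  pcomp_mono st.D_le_adjoint le_rfl

theorem DstarD_le : st.DstarD ≤ pcomp st.D.adjoint st.D.adjoint :=
  pcomp_mono le_rfl st.D_le_adjoint

theorem mapsDomInfty_sqrt_RDs : MapsDomInfty st.DDstar (CFC.sqrt st.RDs) :=
  st.RDs_spec.isResolventAt.mapsDomInfty_sqrt st.RDs_spec.1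
    (isAccretive_pcomp_of_isFormalAdjoint
      (LinearPMap.adjoint_isFormalAdjoint st.dense_domain).symm)

theorem mapsDomInfty_sqrt_RD : MapsDomInfty st.DstarD (CFC.sqrt st.RD) :=
  st.RD_spec.isResolventAt.mapsDomInfty_sqrt st.RD_spec.1
    (isAccretive_pcomp_of_isFormalAdjoint
      (LinearPMap.adjoint_isFormalAdjoint st.dense_domain))

variable {st}

theorem Smooth.apply_mem_domInfty (hsm : st.Smooth) {x : H →L[ℂ] H} (hx : x ∈ st.AD) {ξ : H}
    (hξ : ξ ∈ domInfty st.D.adjoint) : x ξ ∈ domInfty st.D :=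
  mem_domInfty.mpr fun n => (hsm x hx).1 n ξ (mem_domInfty.mp hξ n)

theorem Smooth.rChain_apply_mem_domInfty (hsm : st.Smooth) {x : H →L[ℂ] H} (hx : x ∈ st.AD)
    {L : H →ₗ.[ℂ] H} {C S : H →L[ℂ] H} {k : ℕ} (hL : L ≤ pcomp st.D.adjoint st.D.adjoint)
    (hC : MapsDomInfty L C) (hS : RChain L C k x S) : ∀ ξ ∈ domInfty L, S ξ ∈ domInfty st.D :=
  hS.apply_mem_domInfty hC (fun _ h => apply_mem_domInfty_of_le_pcomp st.D_le_adjoint hL h)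
    fun _ hξ => hsm.apply_mem_domInfty hx (domInfty_pcomp_self_subset (domInfty_mono hL hξ))

end PreSpectralTriple

end NCG

open NCG in
theorem stmt4_general {H : Type*} [NormedAddCommGroup H] [InnerProductSpace ℂ H] [CompleteSpace H]
    (st : PreSpectralTriple H) (hsm : st.Smooth) :
    ∀ x ∈ st.AD, ∀ k : ℕ,
      (∀ S, RChain st.DDstar (CFC.sqrt st.RDs) k x S →
        ∀ ξ ∈ domInfty st.DDstar, S ξ ∈ domInfty st.D) ∧
      (∀ S, RChain st.DstarD (CFC.sqrt st.RD) k x S →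
        ∀ ξ ∈ domInfty st.DstarD, S ξ ∈ domInfty st.D) :=
  fun _ hx _ =>
    ⟨fun _ => hsm.rChain_apply_mem_domInfty hx st.DDstar_le st.mapsDomInfty_sqrt_RDs,
      fun _ => hsm.rChain_apply_mem_domInfty hx st.DstarD_le st.mapsDomInfty_sqrt_RD⟩

open NCG in
/-- Let `(𝒜, H, D)` be a smooth pre-spectral triple.  Then for all
`x ∈ 𝒜 ∪ ∂(𝒜)` and all `k ≥ 0`, the operator `R^k_{|D*|}(x)` maps `dom_∞(|D*|)` into
`dom_∞(D)`, and `R^k_{|D|}(x)` maps `dom_∞(|D|)` into `dom_∞(D)`. -/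
theorem stmt4 {H : Type*} [NormedAddCommGroup H] [InnerProductSpace ℂ H] [CompleteSpace H]
    [TopologicalSpace.SeparableSpace H] (st : PreSpectralTriple H) (hsm : st.Smooth) :
    ∀ x ∈ st.AD, ∀ k : ℕ,
      (∀ S, RChain st.DDstar (CFC.sqrt st.RDs) k x S →
        ∀ ξ ∈ domInfty st.DDstar, S ξ ∈ domInfty st.D) ∧
      (∀ S, RChain st.DstarD (CFC.sqrt st.RD) k x S →
        ∀ ξ ∈ domInfty st.DstarD, S ξ ∈ domInfty st.D) :=
  stmt4_general st hsm
end
end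

section
/- If (𝒜, H, D) is a smoothly p-dimensional pre-spectral triple with p ≥ 1, then for all k ≥ 0 and all x ∈ 𝒜 ∪ ∂(𝒜) one has R^k_{|D*|}(x)(1+|D*|²)^{-1/2} ∈ 𝓛_{p,∞} and R^k_{|D|}(x)(1+|D|²)^{-1/2} ∈ 𝓛_{p,∞}. -/
set_option synthInstance.maxHeartbeats 400000
set_option maxHeartbeats 1000000

noncomputable section

/-!
Split `√r = r^{p/2} g_t(r) + h_t(r)` with `g_t(r) = √r · max(√r, t)^{-p} ≤ t^{1-p}` and
`0 ≤ h_t(r) ≤ t` (`h_t` vanishes where `√r ≥ t`). Applied through the functional calculus to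
`a = (1 + |D|²)⁻¹`, this writes `S a^{1/2} = (S a^{p/2}) g_t(a) + S h_t(a)`, hence
`μ(n, S a^{1/2}) ≤ μ(n, S a^{p/2}) t^{1-p} + ‖S‖ t`. If `S a^{p/2} ∈ 𝓛_{1,∞}`, the choice
`t = (n+1)^{-1/p}` balances both terms at `O((n+1)^{-1/p})`; letting `t → 0` shows that
`S a^{1/2}` is a norm limit of compact operators.
-/

namespace NCG

open NNReal

variable {H : Type*} [NormedAddCommGroup H] [InnerProductSpace ℂ H]

section SingularValues

lemma sval_nonneg (T : H →L[ℂ] H) (n : ℕ) : 0 ≤ sval T n :=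
  Real.sInf_nonneg <| by rintro c ⟨R, -, rfl⟩; exact norm_nonneg _

lemma sval_le_norm_sub (T R : H →L[ℂ] H) {n : ℕ}
    (hR : Module.rank ℂ (LinearMap.range (R : H →ₗ[ℂ] H)) ≤ n) : sval T n ≤ ‖T - R‖ :=
  csInf_le ⟨0, by rintro c ⟨R, -, rfl⟩; exact norm_nonneg _⟩ ⟨R, hR, rfl⟩

lemma sval_mul_add_le (A B K : H →L[ℂ] H) (n : ℕ) :
    sval (A * B + K) n ≤ sval A n * ‖B‖ + ‖K‖ := by
  suffices sval (A * B + K) n - ‖K‖ ≤ ‖B‖ • sval A n by rw [smul_eq_mul] at this; linarith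
  conv_rhs => rw [sval, ← Real.sInf_smul_of_nonneg (norm_nonneg B)]
  refine le_csInf ⟨_, Set.smul_mem_smul_set ⟨0, by simp, rfl⟩⟩ ?_
  rintro _ ⟨_, ⟨R, hR, rfl⟩, rfl⟩
  have hRB : Module.rank ℂ (LinearMap.range ((R * B : H →L[ℂ] H) : H →ₗ[ℂ] H)) ≤ n :=
    (Submodule.rank_mono (LinearMap.range_comp_le_range (B : H →ₗ[ℂ] H) _)).trans hR
  calc sval (A * B + K) n - ‖K‖ ≤ ‖A * B + K - R * B‖ - ‖K‖ :=
        sub_le_sub_right (sval_le_norm_sub _ _ hRB) _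
    _ ≤ ‖(A - R) * B‖ := by
        rw [sub_le_iff_le_add, show A * B + K - R * B = (A - R) * B + K by noncomm_ring]
        exact norm_add_le _ _
    _ ≤ ‖B‖ • ‖A - R‖ := by rw [smul_eq_mul, mul_comm]; exact norm_mul_le _ _

end SingularValues

variable [CompleteSpace H]

section Interpolation

variable {S A B : H →L[ℂ] H} {p : ℝ}

lemma isCompactOperator_mul_of_forall_eq_mul_add (hSA : IsCompactOperator (S * A))
    (hB : ∀ t : ℝ, 0 < t → ∃ G K, B = A * G + K ∧ ‖K‖ ≤ t) :
    IsCompactOperator (S * B) := by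
  refine isClosed_setOfPred_isCompactOperator.closure_subset
    (Metric.mem_closure_iff.mpr fun ε hε => ?_)
  obtain ⟨G, K, rfl, hK⟩ := hB (ε / (‖S‖ + 1)) (by positivity)
  refine ⟨S * A * G, ?_, ?_⟩
  · rw [Set.mem_ofPred_eq, ContinuousLinearMap.mul_def, ContinuousLinearMap.coe_comp]
    exact hSA.comp_clm _
  · rw [dist_eq_norm, show S * (A * G + K) - S * A * G = S * K by noncomm_ring]
    calc ‖S * K‖ ≤ ‖S‖ * (ε / (‖S‖ + 1)) := (norm_mul_le _ _).trans (by gcongr)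
      _ < ε := by
        rw [mul_div_assoc', div_lt_iff₀ (by positivity)]
        nlinarith

lemma sval_mul_le_of_eq_mul_add {G K : H →L[ℂ] H} (hB : B = A * G + K) (n : ℕ) :
    sval (S * B) n ≤ sval (S * A) n * ‖G‖ + ‖S‖ * ‖K‖ := by
  rw [hB, mul_add, ← mul_assoc]
  exact (sval_mul_add_le _ _ _ n).trans (by gcongr; exact norm_mul_le _ _)

lemma memLpW_mul_of_forall_eq_mul_add (hp : 0 < p) (hSA : MemLpW 1 (S * A))
    (hB : ∀ t : ℝ, 0 < t → ∃ G K, B = A * G + K ∧ ‖G‖ ≤ t ^ (1 - p) ∧ ‖K‖ ≤ t) :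
    MemLpW p (S * B) := by
  obtain ⟨hcpt, C, hC⟩ := hSA
  refine ⟨isCompactOperator_mul_of_forall_eq_mul_add hcpt fun t ht => ?_, C + ‖S‖, fun n => ?_⟩
  · obtain ⟨G, K, hGK, -, hK⟩ := hB t ht
    exact ⟨G, K, hGK, hK⟩
  set N : ℝ := (n : ℝ) + 1
  have hN : 0 < N := by positivity
  obtain ⟨G, K, hGK, hG, hK⟩ := hB (N ^ (-(1 / p))) (by positivity)
  have hexp : N ^ (-(1 / (1 : ℝ))) * (N ^ (-(1 / p))) ^ (1 - p) = N ^ (-(1 / p)) := by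
    rw [← Real.rpow_mul hN.le, ← Real.rpow_add hN]
    congr 1
    field_simp
    ring
  calc sval (S * B) n ≤ sval (S * A) n * ‖G‖ + ‖S‖ * ‖K‖ := sval_mul_le_of_eq_mul_add hGK n
    _ ≤ C * N ^ (-(1 / (1 : ℝ))) * (N ^ (-(1 / p))) ^ (1 - p) + ‖S‖ * N ^ (-(1 / p)) := by
        gcongr
        · exact (sval_nonneg _ _).trans (hC n)
        · exact hC n
    _ = (C + ‖S‖) * N ^ (-(1 / p)) := by rw [mul_assoc, hexp]; ring

end Interpolation

section SqrtSplitting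

def sqrtCutoffFactor (p : ℝ) (t r : ℝ≥0) : ℝ≥0 := sqrt r * max (sqrt r) t ^ (-p)

def sqrtCutoffRemainder (p : ℝ) (t r : ℝ≥0) : ℝ≥0 := sqrt r - r ^ (p / 2) * sqrtCutoffFactor p t r

variable {p : ℝ} {t : ℝ≥0}

lemma rpow_half_eq_sqrt_rpow (p : ℝ) (r : ℝ≥0) : r ^ (p / 2) = sqrt r ^ p := by
  rw [sqrt_eq_rpow, ← rpow_mul, one_div_mul_eq_div]

lemma continuous_sqrtCutoffFactor (p : ℝ) (ht : t ≠ 0) : Continuous (sqrtCutoffFactor p t) :=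
  continuous_sqrt.mul <| continuous_iff_continuousAt.2 fun r =>
    ((continuous_sqrt.max continuous_const).tendsto r).nnrpow tendsto_const_nhds
      (.inl (ne_bot_of_le_ne_bot ht (le_max_right _ _)))

lemma continuous_sqrtCutoffRemainder (hp : 0 ≤ p) (ht : t ≠ 0) :
    Continuous (sqrtCutoffRemainder p t) :=
  continuous_sqrt.sub <|
    (continuous_rpow_const (by positivity)).mul (continuous_sqrtCutoffFactor p ht)

lemma sqrtCutoffFactor_le (hp : 1 ≤ p) (ht : 0 < t) (r : ℝ≥0) :
    sqrtCutoffFactor p t r ≤ t ^ (1 - p) := by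
  have hm : max (sqrt r) t ≠ 0 := (ht.trans_le (le_max_right _ _)).ne'
  calc sqrtCutoffFactor p t r ≤ max (sqrt r) t * max (sqrt r) t ^ (-p) := by
        unfold sqrtCutoffFactor; gcongr; exact le_max_left _ _
    _ = max (sqrt r) t ^ (1 - p) := by rw [sub_eq_add_neg, rpow_add hm, rpow_one]
    _ ≤ t ^ (1 - p) := rpow_le_rpow_of_nonpos ht (le_max_right _ _) (by linarith)

lemma rpow_mul_sqrtCutoffFactor_le (hp : 0 ≤ p) (ht : 0 < t) (r : ℝ≥0) :
    r ^ (p / 2) * sqrtCutoffFactor p t r ≤ sqrt r := by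
  have hm : max (sqrt r) t ≠ 0 := (ht.trans_le (le_max_right _ _)).ne'
  calc r ^ (p / 2) * sqrtCutoffFactor p t r = sqrt r * (sqrt r ^ p * max (sqrt r) t ^ (-p)) := by
        rw [sqrtCutoffFactor, rpow_half_eq_sqrt_rpow]; ring
    _ ≤ sqrt r * (max (sqrt r) t ^ p * max (sqrt r) t ^ (-p)) := by
        gcongr; exact le_max_left _ _
    _ = sqrt r := by rw [← rpow_add hm, add_neg_cancel, rpow_zero, mul_one]

lemma sqrtCutoffRemainder_le (p : ℝ) (ht : 0 < t) (r : ℝ≥0) : sqrtCutoffRemainder p t r ≤ t := by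
  rcases le_total (sqrt r) t with hr | hr
  · exact tsub_le_self.trans hr
  · have hr0 : sqrt r ≠ 0 := (ht.trans_le hr).ne'
    rw [sqrtCutoffRemainder, sqrtCutoffFactor, max_eq_left hr, rpow_half_eq_sqrt_rpow,
      mul_left_comm, ← rpow_add hr0, add_neg_cancel, rpow_zero, mul_one, tsub_self]
    exact zero_le

lemma sqrt_eq_rpow_mul_sqrtCutoffFactor_add (hp : 0 ≤ p) (ht : 0 < t) (r : ℝ≥0) :
    sqrt r = r ^ (p / 2) * sqrtCutoffFactor p t r + sqrtCutoffRemainder p t r :=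
  (add_tsub_cancel_of_le (rpow_mul_sqrtCutoffFactor_le hp ht r)).symm

lemma exists_sqrt_eq_rpow_mul_add {a : H →L[ℂ] H} (hp : 1 ≤ p) (ht : 0 < t) :
    ∃ G K, CFC.sqrt a = CFC.rpow a (p / 2) * G + K ∧
      ‖G‖ ≤ (t : ℝ) ^ (1 - p) ∧ ‖K‖ ≤ t := by
  have hp0 : 0 ≤ p := zero_le_one.trans hp
  refine ⟨cfc (sqrtCutoffFactor p t) a, cfc (sqrtCutoffRemainder p t) a, ?_, ?_, ?_⟩
  · have hf := (continuous_sqrtCutoffFactor p ht.ne').continuousOn (s := spectrum ℝ≥0 a)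
    have hr := (continuous_rpow_const (y := p / 2) (by positivity)).continuousOn
      (s := spectrum ℝ≥0 a)
    rw [CFC.sqrt_eq_cfc, CFC.rpow, ← cfc_mul _ _ a hr hf,
      ← cfc_add a (fun r => r ^ (p / 2) * sqrtCutoffFactor p t r) _ (hr.mul hf)
        (continuous_sqrtCutoffRemainder hp0 ht.ne').continuousOn]
    exact cfc_congr fun r _ => sqrt_eq_rpow_mul_sqrtCutoffFactor_add hp0 ht r
  · rw [← coe_rpow]
    exact_mod_cast nnnorm_cfc_nnreal_le (a := a) fun r _ => sqrtCutoffFactor_le hp ht r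
  · exact_mod_cast nnnorm_cfc_nnreal_le (a := a) fun r _ => sqrtCutoffRemainder_le p ht r

end SqrtSplitting

lemma memLpW_mul_sqrt_of_memLpW_one_mul_rpow {S a : H →L[ℂ] H} {p : ℝ}
    (hp : 1 ≤ p) (h : MemLpW 1 (S * CFC.rpow a (p / 2))) : MemLpW p (S * CFC.sqrt a) :=
  memLpW_mul_of_forall_eq_mul_add (by linarith) h fun t ht =>
    exists_sqrt_eq_rpow_mul_add (t := ⟨t, ht.le⟩) hp ht

end NCG

open NCG in
theorem stmt7_general {H : Type*} [NormedAddCommGroup H] [InnerProductSpace ℂ H] [CompleteSpace H]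
    (st : PreSpectralTriple H)
    (p : ℝ) (hp : 1 ≤ p) (hsd : st.SmoothlyDim p) :
    ∀ x ∈ st.AD, ∀ k : ℕ,
      (∀ S, RChain st.DDstar (CFC.sqrt st.RDs) k x S → MemLpW p (S * CFC.sqrt st.RDs)) ∧
      (∀ S, RChain st.DstarD (CFC.sqrt st.RD) k x S → MemLpW p (S * CFC.sqrt st.RD)) := by
  intro x hx k
  obtain ⟨hRD, hRDs⟩ := hsd.2.2 x hx k
  exact ⟨fun S hS => memLpW_mul_sqrt_of_memLpW_one_mul_rpow hp (hRDs S hS),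
    fun S hS => memLpW_mul_sqrt_of_memLpW_one_mul_rpow hp (hRD S hS)⟩

open NCG in
/-- If `(𝒜, H, D)` is a smoothly `p`-dimensional pre-spectral triple with
`p ≥ 1`, then for all `k ≥ 0` and `x ∈ 𝒜 ∪ ∂(𝒜)`,
`R^k_{|D*|}(x)(1+|D*|²)^{-1/2} ∈ 𝓛_{p,∞}` and `R^k_{|D|}(x)(1+|D|²)^{-1/2} ∈ 𝓛_{p,∞}`. -/
theorem stmt7 {H : Type*} [NormedAddCommGroup H] [InnerProductSpace ℂ H] [CompleteSpace H]
    [TopologicalSpace.SeparableSpace H] (st : PreSpectralTriple H)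
    (p : ℝ) (hp : 1 ≤ p) (hsd : st.SmoothlyDim p) :
    ∀ x ∈ st.AD, ∀ k : ℕ,
      (∀ S, RChain st.DDstar (CFC.sqrt st.RDs) k x S → MemLpW p (S * CFC.sqrt st.RDs)) ∧
      (∀ S, RChain st.DstarD (CFC.sqrt st.RD) k x S → MemLpW p (S * CFC.sqrt st.RD)) :=
  stmt7_general st p hp hsd
end
end
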